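/- Let n ≥ 1 and for symmetric C, D ∈ ℝ^{n×n} define OGW(C,D) := (1/n²)·(‖C‖_F² + ‖D‖_F² − 2·sup_{P ∈ O_n ∩ E_n} tr(C P D Pᵀ)), where O_n := {P ∈ ℝ^{n×n} : Pᵀ P = I} and E_n := {P ∈ ℝ^{n×n} : P·1 = Pᵀ·1 = 1}. Then for all symmetric C, D, E ∈ ℝ^{n×n}, √(OGW(C,E)) ≤ √(OGW(C,D)) + √(OGW(D,E)). -/

import Mathlib

/-!
For `P ∈ O_n ∩ E_n` one has `‖CP - PD‖_F² = ‖C‖_F² + ‖D‖_F² - 2 tr(C P D Pᵀ)`, so `n √OGW(C, D)`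
is the infimum of `‖CP - PD‖_F` over the monoid `O_n ∩ E_n`. Since
`C(PQ) - (PQ)E = (CP - PD)Q + P(DQ - QE)` and the Frobenius norm is invariant under orthogonal
factors, this infimum satisfies the triangle inequality.
-/

open Matrix BigOperators

noncomputable section

/-- Squared Frobenius norm of a real matrix. -/
def frobSq {m n : ℕ} (A : Matrix (Fin m) (Fin n) ℝ) : ℝ := ∑ i, ∑ j, (A i j) ^ 2

/-- Euclidean norm of a real vector. -/
def vnorm {n : ℕ} (v : Fin n → ℝ) : ℝ := Real.sqrt (∑ i, (v i) ^ 2)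

/-- Eigenvalues of a real symmetric (Hermitian) matrix, listed in descending order. -/
def eigDesc {n : ℕ} {A : Matrix (Fin n) (Fin n) ℝ} (hA : A.IsHermitian) : Fin n → ℝ :=
  fun i => (hA.eigenvalues ∘ Tuple.sort hA.eigenvalues) i.rev

/-- Conjugating a real symmetric (Hermitian) matrix preserves symmetry. -/
theorem conjHerm {n m : ℕ} (V : Matrix (Fin n) (Fin m) ℝ) {C : Matrix (Fin n) (Fin n) ℝ}
    (hC : C.IsHermitian) : (Vᵀ * C * V).IsHermitian := by
  have h := Matrix.isHermitian_mul_mul_conjTranspose Vᵀ hC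
  simpa using h


/-- The set `O_n ∩ E_n` of orthogonal matrices whose row and column sums all equal `1`. -/
def OE (n : ℕ) : Set (Matrix (Fin n) (Fin n) ℝ) :=
  {P | Pᵀ * P = 1 ∧ (P *ᵥ (fun _ => (1 : ℝ)) = fun _ => 1)
    ∧ (Pᵀ *ᵥ (fun _ => (1 : ℝ)) = fun _ => 1)}

/-- The orthogonal Gromov-Wasserstein discrepancy `OGW`. -/
def OGW (n : ℕ) (C D : Matrix (Fin n) (Fin n) ℝ) : ℝ :=
  (1 / (n : ℝ) ^ 2) * (frobSq C + frobSq D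
    - 2 * sSup ((fun P => Matrix.trace (C * P * D * Pᵀ)) '' (OE n)))

attribute [local instance] Matrix.frobeniusNormedAddCommGroup

namespace Matrix

section Frobenius

variable {m n ι : Type*} [Fintype m] [Fintype n] [Fintype ι] [DecidableEq ι]

theorem frobenius_norm_sq_eq_sum (A : Matrix m n ℝ) : ‖A‖ ^ 2 = ∑ i, ∑ j, A i j ^ 2 := by
  rw [frobenius_norm_def, ← Real.sqrt_eq_rpow, Real.sq_sqrt (by positivity)]
  simp only [Real.rpow_two, Real.norm_eq_abs, sq_abs]

theorem frobenius_norm_sq_eq_trace (A : Matrix m n ℝ) : ‖A‖ ^ 2 = trace (A * Aᵀ) := by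
  rw [frobenius_norm_sq_eq_sum]
  simp [trace, mul_apply, sq]

theorem frobenius_norm_mul_orthogonal (A : Matrix m ι ℝ) {Q : Matrix ι ι ℝ}
    (hQ : Q ∈ orthogonalGroup ι ℝ) : ‖A * Q‖ = ‖A‖ := by
  rw [← sq_eq_sq₀ (norm_nonneg _) (norm_nonneg _), frobenius_norm_sq_eq_trace,
    frobenius_norm_sq_eq_trace, transpose_mul, Matrix.mul_assoc, ← Matrix.mul_assoc Q,
    (mem_orthogonalGroup_iff ι ℝ).1 hQ, Matrix.one_mul]

theorem frobenius_norm_orthogonal_mul (A : Matrix ι n ℝ) {Q : Matrix ι ι ℝ}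
    (hQ : Q ∈ orthogonalGroup ι ℝ) : ‖Q * A‖ = ‖A‖ := by
  have hQt : Qᵀ ∈ orthogonalGroup ι ℝ := by
    rw [mem_orthogonalGroup_iff, transpose_transpose, ← mem_orthogonalGroup_iff']
    exact hQ
  rw [← frobenius_norm_transpose, transpose_mul, frobenius_norm_mul_orthogonal _ hQt,
    frobenius_norm_transpose]

theorem frobenius_norm_mul_sub_mul_sq {C D P : Matrix ι ι ℝ} (hC : C.IsSymm) (hD : D.IsSymm)
    (hP : P ∈ orthogonalGroup ι ℝ) :
    ‖C * P - P * D‖ ^ 2 = ‖C‖ ^ 2 + ‖D‖ ^ 2 - 2 * trace (C * P * D * Pᵀ) := by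
  have hPPt : P * Pᵀ = 1 := (mem_orthogonalGroup_iff ι ℝ).1 hP
  have hPtP : Pᵀ * P = 1 := (mem_orthogonalGroup_iff' ι ℝ).1 hP
  simp only [frobenius_norm_sq_eq_trace, transpose_sub, transpose_mul, hC.eq, hD.eq]
  have hexp : (C * P - P * D) * (Pᵀ * C - D * Pᵀ)
      = C * (P * Pᵀ) * C - C * P * D * Pᵀ - P * D * Pᵀ * C + P * (D * D * Pᵀ) := by
    noncomm_ring
  rw [hexp, hPPt, Matrix.mul_one, trace_add, trace_sub, trace_sub,
    trace_mul_comm (P * D * Pᵀ) C, trace_mul_comm P, Matrix.mul_assoc (D * D), hPtP,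
    Matrix.mul_one]
  simp only [Matrix.mul_assoc]
  ring

end Frobenius

section ConjDist

variable {ι : Type*} [Fintype ι] [DecidableEq ι]

/-- For orthogonal `P`, `‖C * P - P * D‖ = ‖C - P * D * Pᵀ‖`, so this is the distance from `C`
to the conjugates of `D` by `S`. -/
def conjDist (S : Submonoid (Matrix ι ι ℝ)) (C D : Matrix ι ι ℝ) : ℝ :=
  ⨅ P : S, ‖C * P - P * D‖

theorem conjDist_triangle {S : Submonoid (Matrix ι ι ℝ)} (hS : S ≤ orthogonalGroup ι ℝ)
    (C D E : Matrix ι ι ℝ) : conjDist S C E ≤ conjDist S C D + conjDist S D E := by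
  refine le_ciInf_add_ciInf fun P Q => ?_
  have hdecomp : C * (P * Q) - P * Q * E = (C * P - P * D) * Q + P * (D * Q - Q * E) := by
    noncomm_ring
  calc conjDist S C E ≤ ‖C * ↑(P * Q) - ↑(P * Q) * E‖ :=
        ciInf_le ⟨0, Set.forall_mem_range.2 fun _ => norm_nonneg _⟩ (P * Q)
    _ = ‖(C * P - P * D) * Q + P * (D * Q - Q * E)‖ := by rw [Submonoid.coe_mul, hdecomp]
    _ ≤ ‖(C * P - P * D) * Q‖ + ‖P * (D * Q - Q * E)‖ := norm_add_le _ _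
    _ = ‖C * P - P * D‖ + ‖D * Q - Q * E‖ := by
        rw [frobenius_norm_mul_orthogonal _ (hS Q.2), frobenius_norm_orthogonal_mul _ (hS P.2)]

end ConjDist

end Matrix

def OE.submonoid (n : ℕ) : Submonoid (Matrix (Fin n) (Fin n) ℝ) where
  carrier := OE n
  one_mem' := by simp [OE]
  mul_mem' := by
    rintro P Q ⟨hP, hP1, hPt1⟩ ⟨hQ, hQ1, hQt1⟩
    refine ⟨?_, ?_, ?_⟩
    · rw [transpose_mul, Matrix.mul_assoc, ← Matrix.mul_assoc Pᵀ, hP, Matrix.one_mul, hQ]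
    · rw [← mulVec_mulVec, hQ1, hP1]
    · rw [transpose_mul, ← mulVec_mulVec, hPt1, hQt1]

theorem OE.submonoid_le_orthogonalGroup (n : ℕ) :
    OE.submonoid n ≤ orthogonalGroup (Fin n) ℝ :=
  fun _ hP => (mem_orthogonalGroup_iff' _ ℝ).2 hP.1

theorem frobSq_eq_frobenius_norm_sq {m n : ℕ} (A : Matrix (Fin m) (Fin n) ℝ) :
    frobSq A = ‖A‖ ^ 2 :=
  (frobenius_norm_sq_eq_sum A).symm

theorem frobSq_add_frobSq_sub_two_mul_sSup_trace {n : ℕ} {C D : Matrix (Fin n) (Fin n) ℝ}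
    (hC : C.IsSymm) (hD : D.IsSymm) :
    frobSq C + frobSq D - 2 * sSup ((fun P => trace (C * P * D * Pᵀ)) '' OE n)
      = ⨅ P : OE.submonoid n, ‖C * P - P * D‖ ^ 2 := by
  have hkey (P : OE.submonoid n) := frobenius_norm_mul_sub_mul_sq hC hD
    (OE.submonoid_le_orthogonalGroup n P.2)
  have hbdd : BddAbove (Set.range fun P : OE.submonoid n => trace (C * P.1 * D * P.1ᵀ)) :=
    ⟨(‖C‖ ^ 2 + ‖D‖ ^ 2) / 2, Set.forall_mem_range.2 fun P => by
      linarith [hkey P, sq_nonneg ‖C * P - P * D‖]⟩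
  rw [sSup_image', frobSq_eq_frobenius_norm_sq, frobSq_eq_frobenius_norm_sq]
  change _ - 2 * ⨆ P : OE.submonoid n, _ = _
  rw [Antitone.map_ciSup_of_continuousAt (f := fun t => ‖C‖ ^ 2 + ‖D‖ ^ 2 - 2 * t)
    (by fun_prop) (fun _ _ hst => by linarith) hbdd]
  exact iInf_congr fun P => (hkey P).symm

theorem sqrt_OGW_eq_conjDist {n : ℕ} {C D : Matrix (Fin n) (Fin n) ℝ} (hC : C.IsSymm)
    (hD : D.IsSymm) : √(OGW n C D) = conjDist (OE.submonoid n) C D / n := by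
  have hsqrt : √(⨅ P : OE.submonoid n, ‖C * P - P * D‖ ^ 2) = conjDist (OE.submonoid n) C D := by
    rw [Monotone.map_ciInf_of_continuousAt Real.continuous_sqrt.continuousAt
      (fun _ _ => Real.sqrt_le_sqrt) ⟨0, Set.forall_mem_range.2 fun _ => sq_nonneg _⟩]
    exact iInf_congr fun P => Real.sqrt_sq (norm_nonneg _)
  rw [OGW, frobSq_add_frobSq_sub_two_mul_sSup_trace hC hD,
    Real.sqrt_mul' _ (Real.iInf_nonneg fun _ => sq_nonneg _), hsqrt, one_div, Real.sqrt_inv,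
    Real.sqrt_sq n.cast_nonneg, inv_mul_eq_div]

theorem OGW_sqrt_triangle_general (n : ℕ)
    (C D E : Matrix (Fin n) (Fin n) ℝ)
    (hC : C.IsSymm) (hD : D.IsSymm) (hE : E.IsSymm) :
    Real.sqrt (OGW n C E) ≤ Real.sqrt (OGW n C D) + Real.sqrt (OGW n D E) := by
  rw [sqrt_OGW_eq_conjDist hC hE, sqrt_OGW_eq_conjDist hC hD, sqrt_OGW_eq_conjDist hD hE,
    ← add_div]
  exact div_le_div_of_nonneg_right (conjDist_triangle (OE.submonoid_le_orthogonalGroup n) C D E)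
    n.cast_nonneg

/-- The square root of `OGW` satisfies the triangle inequality on symmetric matrices. -/
theorem OGW_sqrt_triangle (n : ℕ) (hn : 1 ≤ n)
    (C D E : Matrix (Fin n) (Fin n) ℝ)
    (hC : C.IsSymm) (hD : D.IsSymm) (hE : E.IsSymm) :
    Real.sqrt (OGW n C E) ≤ Real.sqrt (OGW n C D) + Real.sqrt (OGW n D E) :=
  OGW_sqrt_triangle_general n C D E hC hD hE

end
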